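/- arXiv:2401.11388 — 10 statements merged into one kernel-verified Lean document; each statement's English description precedes it below -/
import Mathlib

section
/- Let p be a nonzero homogeneous polynomial of degree m in R that is semi-invariant, i.e. σ(p) = c • p for some c ∈ F. Then there exist c' ∈ F and a natural number i with i ≤ m such that p = c' • (h₁ ^ i * h₂ ^ (m - i)). -/
/-!
With `P = !![u, λ₁; u, λ₂]`, the forms `h₁, h₂` are the images of `X 0, X 1` under the linear
substitution `X i ↦ ∑ j, P i j • X j`, and the root equations say `P * A = diag(λ₁, λ₂) * P`,
i.e. `σ hᵢ = λᵢ hᵢ`. Since `det P = u (λ₂ - λ₁) ≠ 0` the substitution is invertible, so `p` is the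
image of a homogeneous `q` of degree `m` with `diag(λ₁, λ₂) q = c • q`. A diagonal substitution
scales the monomial `X 0 ^ i * X 1 ^ (m - i)` by `λ₁ ^ i * λ₂ ^ (m - i)`, and these scalars are
pairwise distinct because `λ₁ / λ₂` is not a root of unity; hence `q` is a single monomial.
-/

theorem eq_of_pow_mul_pow_eq_pow_mul_pow {R : Type*} [CommRing R] [IsDomain R] {a b : R}
    (ha : a ≠ 0) (hb : b ≠ 0) (hab : ∀ k : ℕ, 1 ≤ k → a ^ k ≠ b ^ k) {i j k l : ℕ}
    (hsum : i + k = j + l) (h : a ^ i * b ^ k = a ^ j * b ^ l) : i = j := by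
  wlog hij : i ≤ j generalizing i j k l
  · exact (this hsum.symm h.symm (by omega)).symm
  obtain ⟨n, rfl⟩ := Nat.exists_eq_add_of_le hij
  obtain rfl : k = l + n := by omega
  by_contra hn
  refine hab n (by omega) (mul_left_cancel₀ (mul_ne_zero (pow_ne_zero i ha) (pow_ne_zero l hb)) ?_)
  rw [pow_add, pow_add] at h
  linear_combination -h

namespace MvPolynomial

section LinearSubst

variable {σ R : Type*} [Fintype σ] [CommSemiring R]

noncomputable def linearSubst (M : Matrix σ σ R) : MvPolynomial σ R →ₐ[R] MvPolynomial σ R :=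
  aeval fun i => ∑ j, C (M i j) * X j

@[simp]
theorem linearSubst_X (M : Matrix σ σ R) (i : σ) :
    linearSubst M (X i) = ∑ j, C (M i j) * X j :=
  aeval_X _ _

@[simp]
theorem linearSubst_C (M : Matrix σ σ R) (r : R) : linearSubst M (C r) = C r :=
  aeval_C _ _

theorem IsHomogeneous.linearSubst {p : MvPolynomial σ R} {n : ℕ} (hp : p.IsHomogeneous n)
    (M : Matrix σ σ R) : (linearSubst M p).IsHomogeneous n := by
  have := hp.aeval (fun i => ∑ j, C (M i j) * X j) fun i =>
    IsHomogeneous.sum _ _ _ fun j _ => isHomogeneous_C_mul_X (M i j) j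
  rwa [one_mul] at this

theorem linearSubst_diagonal_X [DecidableEq σ] (μ : σ → R) (i : σ) :
    linearSubst (Matrix.diagonal μ) (X i) = C (μ i) * X i := by
  simp [Matrix.diagonal_apply, apply_ite C, ite_mul]

theorem linearSubst_diagonal_monomial [DecidableEq σ] (μ : σ → R) (d : σ →₀ ℕ) (r : R) :
    linearSubst (Matrix.diagonal μ) (monomial d r) =
      monomial d (r * d.prod fun i k => μ i ^ k) := by
  simp only [monomial_eq, map_mul, linearSubst_C, map_finsuppProd, map_pow,
    linearSubst_diagonal_X, mul_pow, Finsupp.prod_mul, mul_assoc]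

theorem linearSubst_linearSubst (M N : Matrix σ σ R) (p : MvPolynomial σ R) :
    linearSubst M (linearSubst N p) = linearSubst (N * M) p := by
  change ((linearSubst M).comp (linearSubst N)) p = _
  congr 1
  refine algHom_ext fun i => ?_
  simp only [AlgHom.comp_apply, linearSubst_X, map_sum, map_mul, linearSubst_C, Matrix.mul_apply,
    Finset.mul_sum, Finset.sum_mul, mul_assoc]
  exact Finset.sum_comm

theorem linearSubst_one [DecidableEq σ] (p : MvPolynomial σ R) : linearSubst 1 p = p := by
  change linearSubst 1 p = AlgHom.id R _ p
  congr 1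
  refine algHom_ext fun i => ?_
  simp [Matrix.one_apply, apply_ite C, ite_mul]

theorem coeff_linearSubst_diagonal [DecidableEq σ] (μ : σ → R) (p : MvPolynomial σ R)
    (d : σ →₀ ℕ) :
    coeff d (linearSubst (Matrix.diagonal μ) p) = (d.prod fun i k => μ i ^ k) * coeff d p := by
  induction p using induction_on' with
  | monomial e r =>
    rw [linearSubst_diagonal_monomial, coeff_monomial, coeff_monomial]
    split_ifs with h
    · rw [h, mul_comm]
    · rw [mul_zero]
  | add p q hp hq => rw [map_add, coeff_add, coeff_add, hp, hq, mul_add]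

end LinearSubst

section Domain

variable {σ R : Type*} [Fintype σ] [CommRing R]

theorem linearSubst_injective [DecidableEq σ] {M : Matrix σ σ R} (hM : IsUnit M.det) :
    Function.Injective (linearSubst M) :=
  Function.LeftInverse.injective (g := linearSubst M⁻¹) fun p => by
    rw [linearSubst_linearSubst, Matrix.mul_nonsing_inv M hM, linearSubst_one]

variable [IsDomain R]

theorem prod_pow_eq_of_linearSubst_diagonal_eq_smul [DecidableEq σ] {μ : σ → R}
    {p : MvPolynomial σ R} {c : R} (h : linearSubst (Matrix.diagonal μ) p = c • p)
    {d : σ →₀ ℕ} (hd : d ∈ p.support) : (d.prod fun i k => μ i ^ k) = c := by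
  have hd' := congrArg (coeff d) h
  rw [coeff_linearSubst_diagonal, coeff_smul, smul_eq_mul] at hd'
  exact mul_right_cancel₀ (mem_support_iff.mp hd) hd'

theorem IsHomogeneous.exists_eq_C_mul_X_pow_mul_X_pow_of_linearSubst_diagonal_eq_smul
    {μ₁ μ₂ : R} (h₁ : μ₁ ≠ 0) (h₂ : μ₂ ≠ 0) (hμ : ∀ k : ℕ, 1 ≤ k → μ₁ ^ k ≠ μ₂ ^ k)
    {q : MvPolynomial (Fin 2) R} {m : ℕ} (hq : q.IsHomogeneous m) {c : R}
    (hc : MvPolynomial.linearSubst (Matrix.diagonal ![μ₁, μ₂]) q = c • q) :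
    ∃ a, ∃ i ≤ m, q = C a * X 0 ^ i * X 1 ^ (m - i) := by
  have hdeg : ∀ d ∈ q.support, d 0 + d 1 = m := fun d hd => by
    rw [hq.degree_eq_sum_deg_support hd, ← Finsupp.degree_apply, Finsupp.degree_eq_sum,
      Fin.sum_univ_two]
  have hweight : ∀ d ∈ q.support, μ₁ ^ d 0 * μ₂ ^ d 1 = c := fun d hd => by
    rw [← prod_pow_eq_of_linearSubst_diagonal_eq_smul hc hd, Finsupp.prod_fintype _ _ (by simp),
      Fin.prod_univ_two]
    rfl
  rcases q.support.eq_empty_or_nonempty with hq0 | ⟨d, hd⟩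
  · exact ⟨0, 0, Nat.zero_le m, by simp [support_eq_empty.mp hq0]⟩
  have huniq : ∀ e ∈ q.support, e = d := fun e he => by
    have h0 : e 0 = d 0 := eq_of_pow_mul_pow_eq_pow_mul_pow h₁ h₂ hμ
      (by rw [hdeg e he, hdeg d hd]) (by rw [hweight e he, hweight d hd])
    have h1 : e 1 = d 1 := by have := hdeg e he; have := hdeg d hd; omega
    ext i
    fin_cases i
    exacts [h0, h1]
  obtain rfl : m = d 0 + d 1 := (hdeg d hd).symm
  refine ⟨coeff d q, d 0, Nat.le_add_right _ _, ?_⟩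
  calc q = monomial d (coeff d q) := eq_monomial_of_support_subset_singleton huniq
    _ = _ := by
      rw [monomial_eq, Finsupp.prod_fintype _ _ (by simp), Fin.prod_univ_two,
        Nat.add_sub_cancel_left, mul_assoc]

end Domain

end MvPolynomial

open MvPolynomial

theorem semi_invariant_homogeneous_structure_general
    {F : Type*} [Field F] (u v : F) (hu : u ≠ 0)
    (σ : MvPolynomial (Fin 2) F →ₐ[F] MvPolynomial (Fin 2) F)
    (hσα : σ (X 0) = X 1)
    (hσβ : σ (X 1) = u • X 0 + v • X 1)
    (lam₁ lam₂ : F)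
    (hroot₁ : lam₁ ^ 2 - v * lam₁ - u = 0)
    (hroot₂ : lam₂ ^ 2 - v * lam₂ - u = 0)
    (hne : lam₁ ≠ lam₂)
    (hnotroot : ∀ k : ℕ, 1 ≤ k → lam₁ ^ k ≠ lam₂ ^ k)
    (m : ℕ) (p : MvPolynomial (Fin 2) F)
    (hhom : p.IsHomogeneous m)
    (c : F) (hsemi : σ p = c • p) :
    ∃ c' : F, ∃ i ≤ m,
      p = c' • ((C u * X 0 + C lam₁ * X 1) ^ i *
                (C u * X 0 + C lam₂ * X 1) ^ (m - i)) := by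
  have hlam₁ : lam₁ ≠ 0 := by rintro rfl; exact hu (by linear_combination -hroot₁)
  have hlam₂ : lam₂ ≠ 0 := by rintro rfl; exact hu (by linear_combination -hroot₂)
  set P : Matrix (Fin 2) (Fin 2) F := !![u, lam₁; u, lam₂]
  have hP : IsUnit P.det := by
    rw [isUnit_iff_ne_zero, Matrix.det_fin_two_of]
    exact fun h => hne (mul_left_cancel₀ hu (by linear_combination h)).symm
  have hσ : σ = linearSubst !![0, 1; u, v] := algHom_ext <| Fin.forall_fin_two.mpr
    ⟨by simp [hσα, Fin.sum_univ_two], by simp [hσβ, Fin.sum_univ_two, smul_eq_C_mul]⟩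
  have hPA : P * !![0, 1; u, v] = Matrix.diagonal ![lam₁, lam₂] * P := by
    ext i j
    fin_cases i <;> fin_cases j <;> simp [P]
    · linear_combination -hroot₁
    · linear_combination -hroot₂
  set q := linearSubst P⁻¹ p
  have hpq : linearSubst P q = p := by
    rw [linearSubst_linearSubst, Matrix.nonsing_inv_mul P hP, linearSubst_one]
  have hq : q.IsHomogeneous m := hhom.linearSubst _
  have hDq : linearSubst (Matrix.diagonal ![lam₁, lam₂]) q = c • q := by
    apply linearSubst_injective hP
    rw [linearSubst_linearSubst, ← hPA, ← linearSubst_linearSubst, hpq, ← hσ, hsemi, map_smul, hpq]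
  obtain ⟨a, i, hi, hqa⟩ :=
    hq.exists_eq_C_mul_X_pow_mul_X_pow_of_linearSubst_diagonal_eq_smul hlam₁ hlam₂ hnotroot hDq
  refine ⟨a, i, hi, ?_⟩
  rw [← hpq, hqa]
  simp [P, Fin.sum_univ_two, smul_eq_C_mul, mul_assoc]

theorem semi_invariant_homogeneous_structure
    {F : Type*} [Field F] (u v : F) (hu : u ≠ 0)
    (σ : MvPolynomial (Fin 2) F →ₐ[F] MvPolynomial (Fin 2) F)
    (hσα : σ (X 0) = X 1)
    (hσβ : σ (X 1) = u • X 0 + v • X 1)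
    (lam₁ lam₂ : F)
    (hroot₁ : lam₁ ^ 2 - v * lam₁ - u = 0)
    (hroot₂ : lam₂ ^ 2 - v * lam₂ - u = 0)
    (hne : lam₁ ≠ lam₂)
    (hnotroot : ∀ k : ℕ, 1 ≤ k → lam₁ ^ k ≠ lam₂ ^ k)
    (m : ℕ) (p : MvPolynomial (Fin 2) F) (hp : p ≠ 0)
    (hhom : p.IsHomogeneous m)
    (c : F) (hsemi : σ p = c • p) :
    ∃ c' : F, ∃ i ≤ m,
      p = c' • ((C u * X 0 + C lam₁ * X 1) ^ i *
                (C u * X 0 + C lam₂ * X 1) ^ (m - i)) :=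
  semi_invariant_homogeneous_structure_general u v hu σ hσα hσβ lam₁ lam₂ hroot₁ hroot₂ hne hnotroot
    m p hhom c hsemi
end

section
/- Let p and q be nonzero homogeneous polynomials in R, of total degrees d_p and d_q respectively, and let g = p/q ∈ K. If σ̂(g) = k • g for some k ∈ F, then there exists an integer i with −d_q ≤ i ≤ d_p such that k = λ₁ ^ i * λ₂ ^ (d_p − d_q − i) (integer powers, which make sense since λ₁ and λ₂ are nonzero). -/
/-!
Each root `λ` of `λ² - vλ - u` gives a linear form `ℓ = (λ - v) α + β` with `σ ℓ = λ ℓ`.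
Since `λ₁ ≠ λ₂`, the forms `ℓ₁, ℓ₂` are a basis of the linear forms, and substituting them for the
variables is a degree-preserving automorphism `θ` of `R` with `σ ∘ θ = θ ∘ D`, where `D` scales the
variables by `λ₁` and `λ₂`. Writing `p = θ P`, `q = θ Q` and clearing denominators in
`σ̂(p/q) = k p/q`, we get `D P · Q = k · P · D Q`. Now compare leading coefficients for any monomial
order: `D` multiplies the coefficient of `αᵃ βᵇ` by `λ₁ᵃ λ₂ᵇ`, so the leading monomials
`α^{a₀} β^{a₁}` of `Q` and `α^{b₀} β^{b₁}` of `P` give `k λ₁^{a₀} λ₂^{a₁} = λ₁^{b₀} λ₂^{b₁}`, and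
homogeneity gives `a₀ + a₁ = d_q`, `b₀ + b₁ = d_p`; take `i = b₀ - a₀`.
-/

open MvPolynomial

section ScaleVars

variable {ι R : Type*} [CommSemiring R]

noncomputable def scaleVars (l : ι → R) : MvPolynomial ι R →ₐ[R] MvPolynomial ι R :=
  aeval fun i => C (l i) * X i

theorem scaleVars_monomial (l : ι → R) (n : ι →₀ ℕ) (c : R) :
    scaleVars l (monomial n c) = monomial n ((n.prod fun i e => l i ^ e) * c) := by
  rw [scaleVars, aeval_monomial, monomial_eq, C_mul, algebraMap_eq]
  simp only [mul_pow, Finsupp.prod_mul, ← map_pow, ← map_finsuppProd]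
  ring

theorem coeff_scaleVars (l : ι → R) (P : MvPolynomial ι R) (n : ι →₀ ℕ) :
    coeff n (scaleVars l P) = (n.prod fun i e => l i ^ e) * coeff n P := by
  classical
  induction P using MvPolynomial.induction_on' with
  | monomial s c =>
    rw [scaleVars_monomial, coeff_monomial, coeff_monomial]
    split_ifs with h
    · rw [h]
    · rw [mul_zero]
  | add P Q hP hQ => rw [map_add, coeff_add, coeff_add, hP, hQ, mul_add]

end ScaleVars

section ScaleVarsDomain

variable {ι R : Type*} [CommRing R] [IsDomain R] {l : ι → R}

theorem support_scaleVars (hl : ∀ i, l i ≠ 0) (P : MvPolynomial ι R) :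
    (scaleVars l P).support = P.support := by
  ext n
  simp only [mem_support_iff, coeff_scaleVars, ne_eq, mul_eq_zero, not_or, and_iff_right_iff_imp]
  exact fun _ => Finsupp.prod_ne_zero_iff.2 fun i _ => pow_ne_zero _ (hl i)

namespace MonomialOrder

variable (m : MonomialOrder ι)

theorem degree_scaleVars (hl : ∀ i, l i ≠ 0) (P : MvPolynomial ι R) :
    m.degree (scaleVars l P) = m.degree P := by
  rw [degree, support_scaleVars hl, degree]

theorem leadingCoeff_scaleVars (hl : ∀ i, l i ≠ 0) (P : MvPolynomial ι R) :
    m.leadingCoeff (scaleVars l P) =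
      ((m.degree P).prod fun i e => l i ^ e) * m.leadingCoeff P := by
  rw [leadingCoeff, m.degree_scaleVars hl, coeff_scaleVars, leadingCoeff]

theorem mul_prod_degree_eq_of_scaleVars_mul_eq (hl : ∀ i, l i ≠ 0) {P Q : MvPolynomial ι R}
    (hP : P ≠ 0) (hQ : Q ≠ 0) {k : R} (h : scaleVars l P * Q = C k * (P * scaleVars l Q)) :
    k * (m.degree Q).prod (fun i e => l i ^ e) = (m.degree P).prod fun i e => l i ^ e := by
  have hlc := congrArg m.leadingCoeff h
  simp only [leadingCoeff_mul, leadingCoeff_C, m.leadingCoeff_scaleVars hl] at hlc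
  have hPQ : m.leadingCoeff P * m.leadingCoeff Q ≠ 0 :=
    mul_ne_zero (m.leadingCoeff_ne_zero_iff.2 hP) (m.leadingCoeff_ne_zero_iff.2 hQ)
  exact mul_right_cancel₀ hPQ (by linear_combination -hlc)

end MonomialOrder

end ScaleVarsDomain

theorem mul_map_eq_of_map_div_eq {R K : Type*} [CommRing R] [Field K] [Algebra R K]
    [IsFractionRing R K] (τ : K →+* K) (σ : R →+* R)
    (hτ : ∀ r, τ (algebraMap R K r) = algebraMap R K (σ r)) {p q c : R} (hq : q ≠ 0)
    (h : τ (algebraMap R K p / algebraMap R K q) =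
      algebraMap R K c * (algebraMap R K p / algebraMap R K q)) :
    σ p * q = c * (p * σ q) := by
  have hinj := IsFractionRing.injective R K
  have hq' : algebraMap R K q ≠ 0 := (map_ne_zero_iff _ hinj).2 hq
  have hσq : algebraMap R K (σ q) ≠ 0 := by rw [← hτ]; exact (map_ne_zero τ).2 hq'
  rw [map_div₀, hτ, hτ] at h
  field_simp at h
  apply hinj
  simp only [map_mul]
  linear_combination h

theorem zpow_eq_of_mul_pow_eq {F : Type*} [Field F] {l₁ l₂ k : F} (h₁ : l₁ ≠ 0)
    (h₂ : l₂ ≠ 0) {a₀ a₁ b₀ b₁ : ℕ} (h : k * (l₁ ^ a₀ * l₂ ^ a₁) = l₁ ^ b₀ * l₂ ^ b₁) :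
    k = l₁ ^ ((b₀ : ℤ) - a₀) * l₂ ^ ((b₁ : ℤ) - a₁) := by
  rw [zpow_sub₀ h₁, zpow_sub₀ h₂, zpow_natCast, zpow_natCast, zpow_natCast, zpow_natCast]
  field_simp
  linear_combination h

theorem add_eq_of_isHomogeneous_of_mem_support {R : Type*} [CommSemiring R]
    {p : MvPolynomial (Fin 2) R} {n : ℕ} (hp : p.IsHomogeneous n) {d : Fin 2 →₀ ℕ}
    (hd : d ∈ p.support) : d 0 + d 1 = n := by
  rw [← hp (mem_support_iff.1 hd), Pi.one_def, ← Finsupp.degree_eq_weight_one,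
    Finsupp.degree_eq_sum, Fin.sum_univ_two]

theorem Finsupp.prod_fin_two_pow {M : Type*} [CommMonoid M] (l₁ l₂ : M) (d : Fin 2 →₀ ℕ) :
    (d.prod fun i e => ![l₁, l₂] i ^ e) = l₁ ^ d 0 * l₂ ^ d 1 := by
  rw [Finsupp.prod_fintype _ _ fun _ => pow_zero _, Fin.prod_univ_two]
  rfl

theorem C_sub_mul_C_inv {ι F : Type*} [Field F] {a b : F} (h : a ≠ b) :
    (C a - C b : MvPolynomial ι F) * C (a - b)⁻¹ = 1 := by
  rw [← C_sub, ← C_mul, mul_inv_cancel₀ (sub_ne_zero.2 h), C_1]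

section Eigen

variable {F : Type*} [Field F] {u v l l₁ l₂ : F}
  {σ : MvPolynomial (Fin 2) F →ₐ[F] MvPolynomial (Fin 2) F}

noncomputable def eigenform (v l : F) : MvPolynomial (Fin 2) F :=
  C (l - v) * X 0 + X 1

theorem map_eigenform (hσα : σ (X 0) = X 1) (hσβ : σ (X 1) = u • X 0 + v • X 1)
    (hl : l ^ 2 - v * l - u = 0) : σ (eigenform v l) = C l * eigenform v l := by
  have hC : (C l : MvPolynomial (Fin 2) F) ^ 2 - C v * C l - C u = 0 := by
    simpa only [map_sub, map_mul, map_pow, map_zero] using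
      congrArg (C : F → MvPolynomial (Fin 2) F) hl
  simp only [eigenform, map_add, map_mul, map_sub, algHom_C, algebraMap_eq, hσα, hσβ,
    smul_eq_C_mul]
  linear_combination -X 0 * hC

noncomputable def eigenSubst (v l₁ l₂ : F) :
    MvPolynomial (Fin 2) F →ₐ[F] MvPolynomial (Fin 2) F :=
  aeval ![eigenform v l₁, eigenform v l₂]

noncomputable def eigenSubstInv (v l₁ l₂ : F) :
    MvPolynomial (Fin 2) F →ₐ[F] MvPolynomial (Fin 2) F :=
  aeval ![C (l₁ - l₂)⁻¹ * (X 0 - X 1), C (l₁ - l₂)⁻¹ * (C (v - l₂) * X 0 + C (l₁ - v) * X 1)]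

theorem comp_eigenSubst (hσα : σ (X 0) = X 1) (hσβ : σ (X 1) = u • X 0 + v • X 1)
    (h₁ : l₁ ^ 2 - v * l₁ - u = 0) (h₂ : l₂ ^ 2 - v * l₂ - u = 0) :
    σ.comp (eigenSubst v l₁ l₂) = (eigenSubst v l₁ l₂).comp (scaleVars ![l₁, l₂]) := by
  refine algHom_ext (Fin.forall_fin_two.2 ⟨?_, ?_⟩) <;>
    simp [eigenSubst, scaleVars, map_eigenform hσα hσβ h₁, map_eigenform hσα hσβ h₂]

theorem eigenSubst_eigenSubstInv (h : l₁ ≠ l₂) (p : MvPolynomial (Fin 2) F) :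
    eigenSubst v l₁ l₂ (eigenSubstInv v l₁ l₂ p) = p := by
  suffices (eigenSubst v l₁ l₂).comp (eigenSubstInv v l₁ l₂) = AlgHom.id F _ from
    DFunLike.congr_fun this p
  refine algHom_ext (Fin.forall_fin_two.2 ⟨?_, ?_⟩) <;>
    simp only [AlgHom.comp_apply, AlgHom.id_apply, eigenSubst, eigenSubstInv, eigenform, aeval_X,
      Matrix.cons_val_zero, Matrix.cons_val_one, map_add, map_sub, map_mul, algHom_C,
      algebraMap_eq]
  · linear_combination (X 0 : MvPolynomial (Fin 2) F) * C_sub_mul_C_inv h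
  · linear_combination (X 1 : MvPolynomial (Fin 2) F) * C_sub_mul_C_inv h

theorem eigenSubst_injective (h : l₁ ≠ l₂) : Function.Injective (eigenSubst v l₁ l₂) := by
  suffices (eigenSubstInv v l₁ l₂).comp (eigenSubst v l₁ l₂) = AlgHom.id F _ from
    Function.LeftInverse.injective (g := eigenSubstInv v l₁ l₂) (DFunLike.congr_fun this)
  refine algHom_ext (Fin.forall_fin_two.2 ⟨?_, ?_⟩) <;>
    simp only [AlgHom.comp_apply, AlgHom.id_apply, eigenSubst, eigenSubstInv, eigenform, aeval_X,
      Matrix.cons_val_zero, Matrix.cons_val_one, map_add, map_sub, map_mul, algHom_C,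
      algebraMap_eq]
  · linear_combination (X 0 : MvPolynomial (Fin 2) F) * C_sub_mul_C_inv h
  · linear_combination (X 1 : MvPolynomial (Fin 2) F) * C_sub_mul_C_inv h

theorem isHomogeneous_eigenSubstInv {p : MvPolynomial (Fin 2) F} {d : ℕ}
    (hp : p.IsHomogeneous d) : (eigenSubstInv v l₁ l₂ p).IsHomogeneous d := by
  rw [← one_mul d]
  refine hp.aeval _ (Fin.forall_fin_two.2 ⟨?_, ?_⟩)
  · exact ((isHomogeneous_X F 0).sub (isHomogeneous_X F 1)).C_mul _
  · exact (((isHomogeneous_X F 0).C_mul _).add ((isHomogeneous_X F 1).C_mul _)).C_mul _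

end Eigen

theorem semi_invariant_rational_structure_general
    {F : Type*} [Field F] (u v : F) (hu : u ≠ 0)
    (σ : MvPolynomial (Fin 2) F →ₐ[F] MvPolynomial (Fin 2) F)
    (hσα : σ (X 0) = X 1)
    (hσβ : σ (X 1) = u • X 0 + v • X 1)
    (σK : FractionRing (MvPolynomial (Fin 2) F) ≃+*
          FractionRing (MvPolynomial (Fin 2) F))
    (hσK : ∀ r : MvPolynomial (Fin 2) F,
      σK (algebraMap (MvPolynomial (Fin 2) F) (FractionRing (MvPolynomial (Fin 2) F)) r) =
        algebraMap (MvPolynomial (Fin 2) F) (FractionRing (MvPolynomial (Fin 2) F)) (σ r))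
    (lam₁ lam₂ : F)
    (hroot₁ : lam₁ ^ 2 - v * lam₁ - u = 0)
    (hroot₂ : lam₂ ^ 2 - v * lam₂ - u = 0)
    (hne : lam₁ ≠ lam₂)
    (p q : MvPolynomial (Fin 2) F) (hp : p ≠ 0) (hq : q ≠ 0)
    (dp dq : ℕ) (hphom : p.IsHomogeneous dp) (hqhom : q.IsHomogeneous dq)
    (k : F)
    (hsemi : σK (algebraMap (MvPolynomial (Fin 2) F) (FractionRing (MvPolynomial (Fin 2) F)) p /
                 algebraMap (MvPolynomial (Fin 2) F) (FractionRing (MvPolynomial (Fin 2) F)) q) =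
      algebraMap (MvPolynomial (Fin 2) F) (FractionRing (MvPolynomial (Fin 2) F)) (C k) *
        (algebraMap (MvPolynomial (Fin 2) F) (FractionRing (MvPolynomial (Fin 2) F)) p /
         algebraMap (MvPolynomial (Fin 2) F) (FractionRing (MvPolynomial (Fin 2) F)) q)) :
    ∃ i : ℤ, -(dq : ℤ) ≤ i ∧ i ≤ (dp : ℤ) ∧
      k = lam₁ ^ i * lam₂ ^ ((dp : ℤ) - (dq : ℤ) - i) := by
  have ne_zero_of_root : ∀ l : F, l ^ 2 - v * l - u = 0 → l ≠ 0 := by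
    rintro l hl rfl
    exact hu (by linear_combination -hl)
  have hl₁ := ne_zero_of_root lam₁ hroot₁
  have hl₂ := ne_zero_of_root lam₂ hroot₂
  have hpq : σ p * q = C k * (p * σ q) :=
    mul_map_eq_of_map_div_eq σK.toRingHom σ.toRingHom hσK hq hsemi
  obtain ⟨P, hP, rfl⟩ : ∃ P, P.IsHomogeneous dp ∧ eigenSubst v lam₁ lam₂ P = p :=
    ⟨_, isHomogeneous_eigenSubstInv hphom, eigenSubst_eigenSubstInv hne p⟩
  obtain ⟨Q, hQ, rfl⟩ : ∃ Q, Q.IsHomogeneous dq ∧ eigenSubst v lam₁ lam₂ Q = q :=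
    ⟨_, isHomogeneous_eigenSubstInv hqhom, eigenSubst_eigenSubstInv hne q⟩
  have hPQ : scaleVars ![lam₁, lam₂] P * Q = C k * (P * scaleVars ![lam₁, lam₂] Q) := by
    apply eigenSubst_injective hne
    simpa only [map_mul, algHom_C, algebraMap_eq, ← AlgHom.comp_apply,
      comp_eigenSubst hσα hσβ hroot₁ hroot₂] using hpq
  have hP0 : P ≠ 0 := by rintro rfl; exact hp (map_zero _)
  have hQ0 : Q ≠ 0 := by rintro rfl; exact hq (map_zero _)
  set m : MonomialOrder (Fin 2) := MonomialOrder.lex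
  have hk := m.mul_prod_degree_eq_of_scaleVars_mul_eq
    (Fin.forall_fin_two.2 ⟨hl₁, hl₂⟩) hP0 hQ0 hPQ
  rw [Finsupp.prod_fin_two_pow, Finsupp.prod_fin_two_pow] at hk
  have hdP := add_eq_of_isHomogeneous_of_mem_support hP (m.degree_mem_support hP0)
  have hdQ := add_eq_of_isHomogeneous_of_mem_support hQ (m.degree_mem_support hQ0)
  refine ⟨(m.degree P 0 : ℤ) - m.degree Q 0, by omega, by omega, ?_⟩
  rw [show (dp : ℤ) - dq - ((m.degree P 0 : ℤ) - m.degree Q 0) =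
    (m.degree P 1 : ℤ) - m.degree Q 1 by omega]
  exact zpow_eq_of_mul_pow_eq hl₁ hl₂ hk

theorem semi_invariant_rational_structure
    {F : Type*} [Field F] (u v : F) (hu : u ≠ 0)
    (σ : MvPolynomial (Fin 2) F →ₐ[F] MvPolynomial (Fin 2) F)
    (hσα : σ (X 0) = X 1)
    (hσβ : σ (X 1) = u • X 0 + v • X 1)
    (σK : FractionRing (MvPolynomial (Fin 2) F) ≃+*
          FractionRing (MvPolynomial (Fin 2) F))
    (hσK : ∀ r : MvPolynomial (Fin 2) F,
      σK (algebraMap (MvPolynomial (Fin 2) F) (FractionRing (MvPolynomial (Fin 2) F)) r) =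
        algebraMap (MvPolynomial (Fin 2) F) (FractionRing (MvPolynomial (Fin 2) F)) (σ r))
    (lam₁ lam₂ : F)
    (hroot₁ : lam₁ ^ 2 - v * lam₁ - u = 0)
    (hroot₂ : lam₂ ^ 2 - v * lam₂ - u = 0)
    (hne : lam₁ ≠ lam₂)
    (hnotroot : ∀ k : ℕ, 1 ≤ k → lam₁ ^ k ≠ lam₂ ^ k)
    (p q : MvPolynomial (Fin 2) F) (hp : p ≠ 0) (hq : q ≠ 0)
    (dp dq : ℕ) (hphom : p.IsHomogeneous dp) (hqhom : q.IsHomogeneous dq)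
    (k : F)
    (hsemi : σK (algebraMap (MvPolynomial (Fin 2) F) (FractionRing (MvPolynomial (Fin 2) F)) p /
                 algebraMap (MvPolynomial (Fin 2) F) (FractionRing (MvPolynomial (Fin 2) F)) q) =
      algebraMap (MvPolynomial (Fin 2) F) (FractionRing (MvPolynomial (Fin 2) F)) (C k) *
        (algebraMap (MvPolynomial (Fin 2) F) (FractionRing (MvPolynomial (Fin 2) F)) p /
         algebraMap (MvPolynomial (Fin 2) F) (FractionRing (MvPolynomial (Fin 2) F)) q)) :
    ∃ i : ℤ, -(dq : ℤ) ≤ i ∧ i ≤ (dp : ℤ) ∧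
      k = lam₁ ^ i * lam₂ ^ ((dp : ℤ) - (dq : ℤ) - i) :=
  semi_invariant_rational_structure_general u v hu σ hσα hσβ σK hσK lam₁ lam₂ hroot₁ hroot₂ hne p q
    hp hq dp dq hphom hqhom k hsemi
end

section
/- Let a and b be nonzero homogeneous polynomials in R having no common non-unit factor. Then the spread set Spr_σ(a, b) = {m ∈ ℕ | a and σ^m(b) have a common non-unit factor} is finite. -/
/-!
In the eigenvector coordinates `(λᵢ - v)·α + β` the endomorphism σ becomes the diagonal scaling
`D : X i ↦ λᵢ X i`, an automorphism preserving homogeneity and coprimality, so one may assume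
σ = D. Every irreducible factor `q` of `a` is homogeneous, and `q ∣ Dᵐ b` means `D⁻ᵐ q ∣ b`.
If two of these translates were associated, `Dᵏ q` would be a scalar multiple of `q` for some
`k ≥ 1`; then `λ₁^(k i) λ₂^(k (e - i))` is constant on the exponents `(i, e - i)` of `q`, which
forces `q` to be a monomial since `λ₁/λ₂` is not a root of unity. A monomial is fixed by `D` up to
a unit, so it would divide `b` too, against coprimality. Hence the translates are pairwise
non-associated irreducible divisors of `b ≠ 0`, of which there are only finitely many.
-/

theorem isRelPrime_map_iff {M N E : Type*} [Monoid M] [Monoid N] [EquivLike E M N]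
    [MulEquivClass E M N] (e : E) {a b : M} : IsRelPrime (e a) (e b) ↔ IsRelPrime a b :=
  ⟨IsRelPrime.of_map e, fun h =>
    IsRelPrime.of_map (MulEquivClass.toMulEquiv e).symm (by simpa using h)⟩

theorem eq_of_pow_mul_pow_eq {G : Type*} [CommGroup G] {x y : G}
    (hxy : ∀ j, 0 < j → x ^ j ≠ y ^ j) {a b a' b' : ℕ} (hsum : a + b = a' + b')
    (h : x ^ a * y ^ b = x ^ a' * y ^ b') : a = a' := by
  wlog hle : a ≤ a' generalizing a b a' b'
  · exact (this hsum.symm h.symm (by omega)).symm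
  obtain ⟨j, rfl⟩ := Nat.exists_eq_add_of_le hle
  obtain rfl : b = b' + j := by omega
  by_contra hj
  refine hxy j (by omega) ?_
  rw [pow_add, pow_add] at h
  exact (mul_left_cancel ((mul_assoc _ _ _).trans (h.trans (mul_right_comm _ _ _)))).symm

namespace UniqueFactorizationMonoid

variable {α ι : Type*} [CommMonoidWithZero α] [UniqueFactorizationMonoid α]

theorem finite_setOf_not_isRelPrime {a : α} (ha : a ≠ 0) {f : ι → α}
    (h : ∀ q, Irreducible q → q ∣ a → {i | q ∣ f i}.Finite) :
    {i | ¬IsRelPrime a (f i)}.Finite := by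
  refine ((factors a).finite_toSet.biUnion fun q hq => h q (irreducible_of_factor q hq)
    (dvd_of_mem_factors hq)).subset fun i hi => ?_
  obtain ⟨z, hz, hza, hzf⟩ : ∃ z, Irreducible z ∧ z ∣ a ∧ z ∣ f i := by
    by_contra! H
    exact hi (WfDvdMonoid.isRelPrime_of_no_irreducible_factors (fun h => ha h.1) H)
  obtain ⟨q, hq, hzq⟩ := exists_mem_factors_of_dvd ha hz hza
  exact Set.mem_biUnion hq (hzq.symm.dvd.trans hzf)

theorem finite_setOf_dvd_of_pairwise_not_associated {b : α} (hb : b ≠ 0) {g : ι → α}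
    (hg : ∀ i, Irreducible (g i)) (hpair : Pairwise fun i j => ¬Associated (g i) (g j)) :
    {i | g i ∣ b}.Finite := by
  refine Set.Finite.of_finite_image (f := fun i => Associates.mk (g i))
    (((factors b).finite_toSet.image Associates.mk).subset ?_) fun i _ j _ hij => ?_
  · rintro _ ⟨i, hi, rfl⟩
    obtain ⟨q, hq, hgq⟩ := exists_mem_factors_of_dvd hb (hg i) hi
    exact ⟨q, hq, Associates.mk_eq_mk_iff_associated.2 hgq.symm⟩
  · by_contra hne
    exact hpair hne (Associates.mk_eq_mk_iff_associated.1 hij)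

end UniqueFactorizationMonoid

namespace MvPolynomial

section Homogeneous

variable {σ R : Type*}

section CommSemiring

variable [CommSemiring R]

theorem isHomogeneous_of_homogeneousComponent_eq_zero {p : MvPolynomial σ R} {n : ℕ}
    (h : ∀ i ≠ n, homogeneousComponent i p = 0) : p.IsHomogeneous n := by
  intro w hw
  by_contra hne
  apply hw
  rw [← coeff_zero w, ← h _ hne, coeff_homogeneousComponent, Finsupp.degree_eq_weight_one]
  exact (if_pos rfl).symm

noncomputable def degreeGrading : MvPolynomial σ R →ₐ[R] Polynomial (MvPolynomial σ R) :=
  aeval fun i => Polynomial.C (X i) * Polynomial.X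

theorem degreeGrading_monomial (w : σ →₀ ℕ) (r : R) :
    degreeGrading (monomial w r) = Polynomial.monomial w.degree (monomial w r) := by
  have hX : (w.prod fun _ k => (Polynomial.X : Polynomial (MvPolynomial σ R)) ^ k) =
      Polynomial.X ^ w.degree :=
    Finset.prod_pow_eq_pow_sum _ _ _
  rw [degreeGrading, aeval_monomial, ← Polynomial.C_mul_X_pow_eq_monomial, monomial_eq]
  simp only [mul_pow, Finsupp.prod_mul, hX, map_mul, ← map_pow, ← map_finsuppProd]
  rw [Polynomial.algebraMap_apply, algebraMap_eq, mul_assoc]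

theorem coeff_degreeGrading (p : MvPolynomial σ R) (n : ℕ) :
    (degreeGrading p).coeff n = homogeneousComponent n p := by
  induction p using MvPolynomial.induction_on' with
  | monomial w r =>
    rw [degreeGrading_monomial, Polynomial.coeff_monomial,
      homogeneousComponent_of_mem (isHomogeneous_monomial r rfl)]
    simp only [eq_comm]
  | add p q hp hq => rw [map_add, Polynomial.coeff_add, hp, hq, map_add]

theorem degreeGrading_injective : Function.Injective (degreeGrading (σ := σ) (R := R)) := by
  intro p q h
  ext w
  simpa [coeff_degreeGrading, coeff_homogeneousComponent] using
    congr_arg (fun f => coeff w (f.coeff w.degree)) h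

theorem degreeGrading_of_isHomogeneous {p : MvPolynomial σ R} {n : ℕ} (hp : p.IsHomogeneous n) :
    degreeGrading p = Polynomial.monomial n p := by
  ext1 i
  rw [coeff_degreeGrading, homogeneousComponent_of_mem hp, Polynomial.coeff_monomial]
  simp only [eq_comm]

end CommSemiring

theorem IsHomogeneous.exists_isHomogeneous_of_dvd [CommRing R] [IsDomain R]
    {p d : MvPolynomial σ R} {n : ℕ} (hp : p.IsHomogeneous n) (hp0 : p ≠ 0) (hd : d ∣ p) :
    ∃ k, d.IsHomogeneous k := by
  classical
  obtain ⟨e, rfl⟩ := hd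
  -- `d * e` maps to a single power of `X`, so the image of `d` has equal top and bottom degree
  have hd0 : degreeGrading d ≠ 0 :=
    (map_ne_zero_iff _ degreeGrading_injective).2 (left_ne_zero_of_mul hp0)
  have he0 : degreeGrading e ≠ 0 :=
    (map_ne_zero_iff _ degreeGrading_injective).2 (right_ne_zero_of_mul hp0)
  have hmul : degreeGrading d * degreeGrading e = Polynomial.monomial n (d * e) := by
    rw [← map_mul, degreeGrading_of_isHomogeneous hp]
  have hdeg := Polynomial.natDegree_mul hd0 he0
  have htdeg := Polynomial.natTrailingDegree_mul hd0 he0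
  rw [hmul, Polynomial.natDegree_monomial, if_neg hp0] at hdeg
  rw [hmul, Polynomial.natTrailingDegree_monomial hp0] at htdeg
  have hled := Polynomial.natTrailingDegree_le_natDegree (p := degreeGrading d)
  have hlee := Polynomial.natTrailingDegree_le_natDegree (p := degreeGrading e)
  refine ⟨(degreeGrading d).natDegree, isHomogeneous_of_homogeneousComponent_eq_zero
    fun i hi => ?_⟩
  rw [← coeff_degreeGrading]
  rcases hi.lt_or_gt with h | h
  · exact Polynomial.coeff_eq_zero_of_lt_natTrailingDegree (by omega)
  · exact Polynomial.coeff_eq_zero_of_natDegree_lt h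

end Homogeneous

section DiagScale

variable {σ R : Type*} [CommSemiring R]

noncomputable def scaleVars (c : σ → R) : MvPolynomial σ R →ₐ[R] MvPolynomial σ R :=
  aeval fun i => C (c i) * X i

@[simp]
theorem scaleVars_X (c : σ → R) (i : σ) : scaleVars c (X i) = C (c i) * X i :=
  aeval_X _ _

@[simp]
theorem scaleVars_C (c : σ → R) (r : R) : scaleVars c (C r) = C r :=
  aeval_C _ _

theorem scaleVars_comp_scaleVars (c d : σ → R) :
    (scaleVars c).comp (scaleVars d) = scaleVars (c * d) :=
  algHom_ext fun i => by
    simp only [AlgHom.comp_apply, scaleVars_X, map_mul, scaleVars_C, Pi.mul_apply]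
    ring

theorem scaleVars_one : scaleVars (1 : σ → R) = AlgHom.id R _ :=
  algHom_ext fun i => by simp

noncomputable def diagScale : (σ → Rˣ) →* (MvPolynomial σ R ≃ₐ[R] MvPolynomial σ R) where
  toFun c := AlgEquiv.ofAlgHom (scaleVars fun i => (c i : R)) (scaleVars fun i => ↑(c i)⁻¹)
    (by rw [scaleVars_comp_scaleVars, ← scaleVars_one]; congr; ext; simp)
    (by rw [scaleVars_comp_scaleVars, ← scaleVars_one]; congr; ext; simp)
  map_one' := AlgEquiv.coe_toAlgHom_injective (by
    show scaleVars _ = AlgHom.id R _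
    rw [← scaleVars_one]; rfl)
  map_mul' c d := AlgEquiv.coe_toAlgHom_injective (by
    show scaleVars _ = (scaleVars _).comp (scaleVars _)
    rw [scaleVars_comp_scaleVars]; rfl)

theorem diagScale_apply (c : σ → Rˣ) (p : MvPolynomial σ R) :
    diagScale c p = scaleVars (fun i => (c i : R)) p := rfl

theorem scaleVars_monomial (c : σ → R) (w : σ →₀ ℕ) (r : R) :
    scaleVars c (monomial w r) = C (w.prod fun i k => c i ^ k) * monomial w r := by
  rw [scaleVars, aeval_monomial, monomial_eq, algebraMap_eq, map_finsuppProd]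
  simp only [mul_pow, Finsupp.prod_mul, map_pow]
  ring

theorem diagScale_monomial (c : σ → Rˣ) (w : σ →₀ ℕ) (r : R) :
    diagScale c (monomial w r) = C (↑(w.prod fun i k => c i ^ k) : R) * monomial w r := by
  rw [diagScale_apply, scaleVars_monomial]
  simp only [Finsupp.prod, Units.coe_prod, Units.val_pow_eq_pow_val]

theorem coeff_diagScale (c : σ → Rˣ) (w : σ →₀ ℕ) (p : MvPolynomial σ R) :
    coeff w (diagScale c p) = ↑(w.prod fun i k => c i ^ k) * coeff w p := by
  induction p using MvPolynomial.induction_on' with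
  | monomial w' r =>
    classical
    rw [diagScale_monomial, coeff_C_mul, coeff_monomial]
    split_ifs with h
    · rw [h]
    · rw [mul_zero, mul_zero]
  | add p q hp hq => rw [map_add, coeff_add, hp, hq, coeff_add, mul_add]

theorem associated_diagScale_monomial (c : σ → Rˣ) (w : σ →₀ ℕ) (r : R) :
    Associated (diagScale c (monomial w r)) (monomial w r) := by
  rw [diagScale_monomial]
  exact associated_unit_mul_left _ _ ((Units.isUnit _).map C)

end DiagScale

section Domain

variable {R : Type*} [CommRing R] [IsDomain R]

theorem IsHomogeneous.exists_eq_monomial_of_associated_diagScale {c : Fin 2 → Rˣ}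
    (hc : ∀ j, 0 < j → c 0 ^ j ≠ c 1 ^ j) {p : MvPolynomial (Fin 2) R} {n : ℕ}
    (hp : p.IsHomogeneous n) (h : Associated (diagScale c p) p) :
    ∃ w r, p = monomial w r := by
  obtain ⟨u, hu⟩ := h
  obtain ⟨r, -, hur⟩ := isUnit_iff_eq_C_of_isReduced.1 u.isUnit
  have hweight : ∀ w ∈ p.support, ((c 0 ^ w 0 * c 1 ^ w 1 : Rˣ) : R) * r = 1 := by
    intro w hw
    have := congr_arg (coeff w) hu
    rw [hur, mul_comm, coeff_C_mul, coeff_diagScale, Finsupp.prod_fintype _ _ (by simp),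
      Fin.prod_univ_two] at this
    exact mul_right_cancel₀ (mem_support_iff.1 hw) (by linear_combination this)
  have hdeg : ∀ w ∈ p.support, w 0 + w 1 = n := by
    intro w hw
    rw [← hp (mem_support_iff.1 hw)]
    simp [Finsupp.weight_apply, Finsupp.sum_fintype, Fin.sum_univ_two]
  have hsupp : ∀ w ∈ p.support, ∀ w' ∈ p.support, w = w' := by
    intro w hw w' hw'
    have hr : r ≠ 0 := right_ne_zero_of_mul_eq_one (hweight w hw)
    have h0 : w 0 = w' 0 := eq_of_pow_mul_pow_eq hc ((hdeg w hw).trans (hdeg w' hw').symm)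
      (Units.ext (mul_right_cancel₀ hr ((hweight w hw).trans (hweight w' hw').symm)))
    ext i
    fin_cases i
    · exact h0
    · have := (hdeg w hw).trans (hdeg w' hw').symm
      simp only [Fin.mk_one, Fin.isValue]
      omega
  obtain ⟨w, r, hwr⟩ := Finsupp.card_support_le_one'.1 (Finset.card_le_one.2 hsupp)
  exact ⟨w, r, by ext v; rw [coeff_monomial, ← Finsupp.single_apply, ← hwr]; rfl⟩

variable [UniqueFactorizationMonoid R]

theorem finite_setOf_not_isRelPrime_diagScale_pow {c : Fin 2 → Rˣ}
    (hc : ∀ j, 0 < j → c 0 ^ j ≠ c 1 ^ j) {a b : MvPolynomial (Fin 2) R} (ha : a ≠ 0)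
    (hb : b ≠ 0) {n : ℕ} (hahom : a.IsHomogeneous n) (hab : IsRelPrime a b) :
    {m : ℕ | ¬IsRelPrime a (diagScale (c ^ m) b)}.Finite := by
  refine UniqueFactorizationMonoid.finite_setOf_not_isRelPrime ha fun q hq hqa => ?_
  obtain ⟨k, hqk⟩ := hahom.exists_isHomogeneous_of_dvd ha hqa
  have hdvd : ∀ m, q ∣ diagScale (c ^ m) b ↔ (diagScale (c ^ m)).symm q ∣ b := fun m => by
    rw [← map_dvd_iff (diagScale (c ^ m)) (a := (diagScale (c ^ m)).symm q) (b := b),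
      AlgEquiv.apply_symm_apply]
  by_cases hmono : ∃ w r, q = monomial w r
  · obtain ⟨w, r, rfl⟩ := hmono
    refine Set.finite_empty.subset fun m hm => hq.not_isUnit (hab hqa ?_)
    have := (associated_diagScale_monomial (c ^ m) w r).map (diagScale (c ^ m)).symm
    rw [AlgEquiv.symm_apply_apply] at this
    exact this.dvd.trans ((hdvd m).1 hm)
  have hnot : ∀ m j, 0 < j →
      ¬Associated ((diagScale (c ^ m)).symm q) ((diagScale (c ^ (m + j))).symm q) := by
    intro m j hj h
    have := h.map (diagScale (c ^ (m + j)))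
    rw [AlgEquiv.apply_symm_apply, pow_add, mul_comm, map_mul, AlgEquiv.mul_apply,
      AlgEquiv.apply_symm_apply] at this
    refine hmono (hqk.exists_eq_monomial_of_associated_diagScale (fun i hi => ?_) this)
    simp only [Pi.pow_apply, ← pow_mul]
    exact hc _ (Nat.mul_pos hj hi)
  simp_rw [hdvd]
  refine UniqueFactorizationMonoid.finite_setOf_dvd_of_pairwise_not_associated hb
    (fun m => (MulEquiv.irreducible_iff (diagScale (c ^ m)).symm).2 hq) fun m m' hne h => ?_
  rcases hne.lt_or_gt with hlt | hlt
  · obtain ⟨j, rfl⟩ := Nat.exists_eq_add_of_lt hlt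
    exact hnot m (j + 1) j.succ_pos h
  · obtain ⟨j, rfl⟩ := Nat.exists_eq_add_of_lt hlt
    exact hnot m' (j + 1) j.succ_pos h.symm

end Domain

section EigenCoords

variable {F : Type*} [Field F]

noncomputable def eigenCoords (v : F) (lam : Fin 2 → F) (hlam : lam 0 ≠ lam 1) :
    MvPolynomial (Fin 2) F ≃ₐ[F] MvPolynomial (Fin 2) F :=
  have h : (C (lam 0) - C (lam 1)) * C (lam 0 - lam 1)⁻¹ = (1 : MvPolynomial (Fin 2) F) := by
    rw [← C_sub, ← C_mul, mul_inv_cancel₀ (sub_ne_zero.2 hlam), C_1]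
  AlgEquiv.ofAlgHom (aeval fun i => C (lam i - v) * X 0 + X 1)
    (aeval ![C (lam 0 - lam 1)⁻¹ * (X 0 - X 1),
      C (lam 0 - lam 1)⁻¹ * (C (lam 0 - v) * X 1 - C (lam 1 - v) * X 0)])
    (algHom_ext fun i => by
      fin_cases i
      · simp
        linear_combination X 0 * h
      · simp
        linear_combination X 1 * h)
    (algHom_ext fun i => by
      fin_cases i
      · simp
        linear_combination X 0 * h
      · simp
        linear_combination X 1 * h)

theorem eigenCoords_symm_isHomogeneous (v : F) (lam : Fin 2 → F) (hlam : lam 0 ≠ lam 1)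
    {p : MvPolynomial (Fin 2) F} {n : ℕ} (hp : p.IsHomogeneous n) :
    ((eigenCoords v lam hlam).symm p).IsHomogeneous n := by
  rw [eigenCoords, AlgEquiv.ofAlgHom_symm, ← one_mul n]
  refine hp.aeval _ fun i => ?_
  fin_cases i
  · exact ((isHomogeneous_X F 0).sub (isHomogeneous_X F 1)).C_mul _
  · exact ((isHomogeneous_C_mul_X _ 1).sub (isHomogeneous_C_mul_X _ 0)).C_mul _

theorem map_eigenCoords {u v : F}
    {σ : MvPolynomial (Fin 2) F →ₐ[F] MvPolynomial (Fin 2) F}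
    (hσα : σ (X 0) = X 1) (hσβ : σ (X 1) = u • X 0 + v • X 1) {c : Fin 2 → Fˣ}
    (hc : (c 0 : F) ≠ c 1) (hroot : ∀ i, (c i : F) ^ 2 - v * c i - u = 0)
    (p : MvPolynomial (Fin 2) F) :
    σ (eigenCoords v (fun i => c i) hc p) = eigenCoords v (fun i => c i) hc (diagScale c p) := by
  have hσC : ∀ r : F, σ (C r) = C r := σ.commutes
  suffices σ.comp (eigenCoords v (fun i => c i) hc).toAlgHom =
      (eigenCoords v (fun i => c i) hc).toAlgHom.comp (diagScale c).toAlgHom from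
    DFunLike.congr_fun this p
  refine algHom_ext fun i => ?_
  have hrootC := congr_arg (C : F → MvPolynomial (Fin 2) F) (hroot i)
  simp [eigenCoords, diagScale_apply, hσα, hσβ, hσC, smul_eq_C_mul] at hrootC ⊢
  linear_combination (-X 0) * hrootC

end EigenCoords

end MvPolynomial

open MvPolynomial

theorem spread_finite_general
    {F : Type*} [Field F] (u v : F) (hu : u ≠ 0)
    (σ : MvPolynomial (Fin 2) F →ₐ[F] MvPolynomial (Fin 2) F)
    (hσα : σ (X 0) = X 1)
    (hσβ : σ (X 1) = u • X 0 + v • X 1)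
    (lam₁ lam₂ : F)
    (hroot₁ : lam₁ ^ 2 - v * lam₁ - u = 0)
    (hroot₂ : lam₂ ^ 2 - v * lam₂ - u = 0)
    (hne : lam₁ ≠ lam₂)
    (hnotroot : ∀ k : ℕ, 1 ≤ k → lam₁ ^ k ≠ lam₂ ^ k)
    (a b : MvPolynomial (Fin 2) F) (ha : a ≠ 0) (hb : b ≠ 0)
    (da : ℕ) (hahom : a.IsHomogeneous da)
    (hcop : ∀ d : MvPolynomial (Fin 2) F, d ∣ a → d ∣ b → IsUnit d) :
    {m : ℕ | ¬ ∀ d : MvPolynomial (Fin 2) F, d ∣ a → d ∣ (⇑σ)^[m] b → IsUnit d}.Finite := by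
  have hlam_ne_zero : ∀ {l : F}, l ^ 2 - v * l - u = 0 → l ≠ 0 := fun h h0 =>
    hu (by subst h0; linear_combination -h)
  set c : Fin 2 → Fˣ :=
    ![Units.mk0 lam₁ (hlam_ne_zero hroot₁), Units.mk0 lam₂ (hlam_ne_zero hroot₂)]
  have hc : (c 0 : F) ≠ c 1 := hne
  set ψ := eigenCoords v (fun i => (c i : F)) hc
  have hiter : ∀ m p, σ^[m] (ψ p) = ψ (diagScale (c ^ m) p) := fun m p => by
    have hsemi : Function.Semiconj ψ (diagScale c) σ := fun p =>
      (map_eigenCoords hσα hσβ hc (fun i => by fin_cases i <;> simpa [c]) p).symm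
    rw [map_pow, AlgEquiv.coe_pow, hsemi.iterate_right m p]
  show {m | ¬IsRelPrime a (σ^[m] b)}.Finite
  rw [← ψ.apply_symm_apply a, ← ψ.apply_symm_apply b] at hcop ⊢
  simp_rw [hiter, isRelPrime_map_iff]
  refine finite_setOf_not_isRelPrime_diagScale_pow (fun j hj h => hnotroot j hj ?_)
    (by simpa using ha) (by simpa using hb)
    (eigenCoords_symm_isHomogeneous v _ hc hahom) ((isRelPrime_map_iff ψ).1 hcop)
  simpa [c] using congr_arg Units.val h

theorem spread_finite
    {F : Type*} [Field F] (u v : F) (hu : u ≠ 0)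
    (σ : MvPolynomial (Fin 2) F →ₐ[F] MvPolynomial (Fin 2) F)
    (hσα : σ (X 0) = X 1)
    (hσβ : σ (X 1) = u • X 0 + v • X 1)
    (lam₁ lam₂ : F)
    (hroot₁ : lam₁ ^ 2 - v * lam₁ - u = 0)
    (hroot₂ : lam₂ ^ 2 - v * lam₂ - u = 0)
    (hne : lam₁ ≠ lam₂)
    (hnotroot : ∀ k : ℕ, 1 ≤ k → lam₁ ^ k ≠ lam₂ ^ k)
    (a b : MvPolynomial (Fin 2) F) (ha : a ≠ 0) (hb : b ≠ 0)
    (da db : ℕ) (hahom : a.IsHomogeneous da) (hbhom : b.IsHomogeneous db)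
    (hcop : ∀ d : MvPolynomial (Fin 2) F, d ∣ a → d ∣ b → IsUnit d) :
    {m : ℕ | ¬ ∀ d : MvPolynomial (Fin 2) F, d ∣ a → d ∣ (⇑σ)^[m] b → IsUnit d}.Finite :=
  spread_finite_general u v hu σ hσα hσβ lam₁ lam₂ hroot₁ hroot₂ hne hnotroot a b ha hb da hahom
    hcop
end

section
/- Let p and q be nonzero homogeneous polynomials in R having no common non-unit factor, and suppose the element g = p/q of K satisfies σ̂(g) = k • g for some k ∈ F. Then p divides σ(p) and q divides σ(q) in R; consequently there exist c_p, c_q ∈ F with σ(p) = c_p • p and σ(q) = c_q • q (i.e. p and q are themselves semi-invariant). -/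
open MvPolynomial

private lemma const_factor_of_homogeneous {F : Type*} [Field F]
    {p w : MvPolynomial (Fin 2) F} {d : ℕ}
    (hp : p ≠ 0) (hphom : p.IsHomogeneous d) (hhom : (p * w).IsHomogeneous d) :
    ∃ c : F, w = C c := by
  have key : ∀ n : ℕ, n ≠ 0 → homogeneousComponent n w = 0 := by
    intro n hn
    by_cases hle : n ≤ w.totalDegree
    · have hmem : p * w ∈ homogeneousSubmodule (Fin 2) F d :=
        (mem_homogeneousSubmodule d (p * w)).mpr hhom
      have hz : homogeneousComponent (d + n) (p * w) = 0 := by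
        rw [homogeneousComponent_of_mem hmem, if_neg (by omega)]
      have hsum : p * w = ∑ j ∈ Finset.range (w.totalDegree + 1),
          p * homogeneousComponent j w := by
        rw [← Finset.mul_sum, sum_homogeneousComponent]
      have hcomp : homogeneousComponent (d + n) (p * w)
          = ∑ j ∈ Finset.range (w.totalDegree + 1),
              (if d + n = d + j then p * homogeneousComponent j w else 0) := by
        rw [hsum, map_sum]
        refine Finset.sum_congr rfl fun j _ => ?_
        exact homogeneousComponent_of_mem
          ((mem_homogeneousSubmodule _ _).mpr
            (hphom.mul (homogeneousComponent_isHomogeneous j w)))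
      simp only [add_right_inj] at hcomp
      rw [Finset.sum_ite_eq] at hcomp
      rw [if_pos (Finset.mem_range.mpr (Nat.lt_succ_of_le hle))] at hcomp
      have h0 : p * homogeneousComponent n w = 0 := hcomp.symm.trans hz
      rcases mul_eq_zero.mp h0 with h | h
      · exact absurd h hp
      · exact h
    · exact homogeneousComponent_eq_zero _ w (Nat.not_le.mp hle)
  have hw0 : w = homogeneousComponent 0 w := by
    conv_lhs => rw [← sum_homogeneousComponent w]
    exact Finset.sum_eq_single 0 (fun b _ hb => key b hb)
      (fun h => absurd (Finset.mem_range.mpr (Nat.succ_pos _)) h)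
  refine ⟨coeff 0 w, ?_⟩
  conv_lhs => rw [hw0, homogeneousComponent_zero]

theorem semi_invariant_numerator_denominator
    {F : Type*} [Field F] (u v : F) (hu : u ≠ 0)
    (σ : MvPolynomial (Fin 2) F →ₐ[F] MvPolynomial (Fin 2) F)
    (hσα : σ (X 0) = X 1)
    (hσβ : σ (X 1) = u • X 0 + v • X 1)
    (σK : FractionRing (MvPolynomial (Fin 2) F) ≃+*
          FractionRing (MvPolynomial (Fin 2) F))
    (hσK : ∀ r : MvPolynomial (Fin 2) F,
      σK (algebraMap (MvPolynomial (Fin 2) F) (FractionRing (MvPolynomial (Fin 2) F)) r) =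
        algebraMap (MvPolynomial (Fin 2) F) (FractionRing (MvPolynomial (Fin 2) F)) (σ r))
    (p q : MvPolynomial (Fin 2) F) (hp : p ≠ 0) (hq : q ≠ 0)
    (dp dq : ℕ) (hphom : p.IsHomogeneous dp) (hqhom : q.IsHomogeneous dq)
    (hcop : ∀ d : MvPolynomial (Fin 2) F, d ∣ p → d ∣ q → IsUnit d)
    (k : F)
    (hsemi : σK (algebraMap (MvPolynomial (Fin 2) F) (FractionRing (MvPolynomial (Fin 2) F)) p /
                 algebraMap (MvPolynomial (Fin 2) F) (FractionRing (MvPolynomial (Fin 2) F)) q) =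
      algebraMap (MvPolynomial (Fin 2) F) (FractionRing (MvPolynomial (Fin 2) F)) (C k) *
        (algebraMap (MvPolynomial (Fin 2) F) (FractionRing (MvPolynomial (Fin 2) F)) p /
         algebraMap (MvPolynomial (Fin 2) F) (FractionRing (MvPolynomial (Fin 2) F)) q)) :
    p ∣ σ p ∧ q ∣ σ q ∧
      ∃ cp cq : F, σ p = cp • p ∧ σ q = cq • q := by
  set A := algebraMap (MvPolynomial (Fin 2) F) (FractionRing (MvPolynomial (Fin 2) F)) with hA
  have injA : Function.Injective A :=
    IsFractionRing.injective (MvPolynomial (Fin 2) F) (FractionRing (MvPolynomial (Fin 2) F))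
  -- the inverse endomorphism
  set τ : MvPolynomial (Fin 2) F →ₐ[F] MvPolynomial (Fin 2) F :=
    aeval ![u⁻¹ • (X 1 - v • X 0), X 0] with hτ
  have hτ0 : τ (X 0) = u⁻¹ • (X 1 - v • X 0) := by
    rw [hτ, aeval_X]; simp
  have hτ1 : τ (X 1) = X 0 := by
    rw [hτ, aeval_X]; simp
  have hτσ : ∀ r : MvPolynomial (Fin 2) F, τ (σ r) = r := by
    intro r
    have hcc : τ.comp σ = AlgHom.id F (MvPolynomial (Fin 2) F) := by
      apply MvPolynomial.algHom_ext
      intro i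
      fin_cases i
      · show τ (σ (X 0)) = X 0
        rw [hσα, hτ1]
      · show τ (σ (X 1)) = X 1
        rw [hσβ, map_add, map_smul, map_smul, hτ0, hτ1, smul_smul,
          mul_inv_cancel₀ hu, one_smul, sub_add_cancel]
    calc τ (σ r) = (τ.comp σ) r := rfl
    _ = r := by rw [hcc]; rfl
  have hστ : ∀ r : MvPolynomial (Fin 2) F, σ (τ r) = r := by
    intro r
    have hcc : σ.comp τ = AlgHom.id F (MvPolynomial (Fin 2) F) := by
      apply MvPolynomial.algHom_ext
      intro i
      fin_cases i
      · show σ (τ (X 0)) = X 0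
        rw [hτ0, map_smul, map_sub, map_smul, hσα, hσβ, add_sub_cancel_right,
          smul_smul, inv_mul_cancel₀ hu, one_smul]
      · show σ (τ (X 1)) = X 1
        rw [hτ1, hσα]
    calc σ (τ r) = (σ.comp τ) r := rfl
    _ = r := by rw [hcc]; rfl
  have hσinj : Function.Injective σ := Function.LeftInverse.injective hτσ
  have hσp0 : σ p ≠ 0 := fun h => hp (by simpa using hσinj (h.trans (map_zero σ).symm))
  have hσq0 : σ q ≠ 0 := fun h => hq (by simpa using hσinj (h.trans (map_zero σ).symm))
  have hAq : A q ≠ 0 := fun h => hq (injA (by simpa using h))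
  have hAσq : A (σ q) ≠ 0 := fun h => hσq0 (injA (by simpa using h))
  -- the key ring identity
  have h1 : A (σ p) / A (σ q) = A (C k) * (A p / A q) := by
    rw [← hσK p, ← hσK q, ← map_div₀]; exact hsemi
  have hEq : σ p * q = C k * (p * σ q) := by
    apply injA
    field_simp at h1
    simp only [map_mul]
    linear_combination h1
  have hk : k ≠ 0 := by
    intro hk0
    rw [hk0, map_zero, zero_mul] at hEq
    exact mul_ne_zero hσp0 hq hEq
  have hrp : IsRelPrime p q := hcop
  have hrpσ : IsRelPrime (σ p) (σ q) := by
    intro d hd1 hd2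
    have h1 : τ d ∣ p := by
      obtain ⟨e, he⟩ := hd1
      exact ⟨τ e, by rw [← hτσ p, he, map_mul]⟩
    have h2 : τ d ∣ q := by
      obtain ⟨e, he⟩ := hd2
      exact ⟨τ e, by rw [← hτσ q, he, map_mul]⟩
    have := hcop _ h1 h2
    have := this.map σ
    rwa [hστ] at this
  have hinv : (C k⁻¹ : MvPolynomial (Fin 2) F) * C k = 1 := by
    rw [← C_mul, inv_mul_cancel₀ hk, C_1]
  -- p ∣ σ p
  have hpσp : p ∣ σ p :=
    hrp.dvd_of_dvd_mul_right ⟨C k * σ q, by linear_combination hEq⟩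
  -- q ∣ σ q
  have hps : p * σ q = C k⁻¹ * (σ p * q) := by
    rw [hEq, ← mul_assoc, hinv, one_mul]
  have hqσq : q ∣ σ q :=
    (hrp.symm).dvd_of_dvd_mul_left ⟨C k⁻¹ * σ p, by linear_combination hps⟩
  -- homogeneity of images
  have hσX : ∀ i : Fin 2, (σ (X i)).IsHomogeneous 1 := by
    intro i
    fin_cases i
    · show (σ (X 0)).IsHomogeneous 1
      rw [hσα]; exact isHomogeneous_X F 1
    · show (σ (X 1)).IsHomogeneous 1
      rw [hσβ, smul_eq_C_mul, smul_eq_C_mul]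
      exact ((isHomogeneous_X F 0).C_mul u).add ((isHomogeneous_X F 1).C_mul v)
  have hσhom : ∀ (r : MvPolynomial (Fin 2) F) (n : ℕ), r.IsHomogeneous n →
      (σ r).IsHomogeneous n := by
    intro r n hr
    have hre : σ r = aeval (σ ∘ X) r := by rw [← aeval_unique]
    rw [hre]
    simpa using hr.aeval (σ ∘ X) (fun i => hσX i)
  obtain ⟨wp, hwp⟩ := id hpσp
  obtain ⟨wq, hwq⟩ := id hqσq
  obtain ⟨cp, hcp⟩ := const_factor_of_homogeneous hp hphom (hwp ▸ hσhom p dp hphom)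
  obtain ⟨cq, hcq⟩ := const_factor_of_homogeneous hq hqhom (hwq ▸ hσhom q dq hqhom)
  exact ⟨hpσp, hqσq, cp, cq,
    by rw [hwp, hcp, smul_eq_C_mul, mul_comm],
    by rw [hwq, hcq, smul_eq_C_mul, mul_comm]⟩
end

section
/- Assume λ₁ ≠ λ₂ and λ₂ ≠ 0. Then for every natural number m, the polynomials h₁ and σ^m(h₂) have no common non-unit factor; that is, the spread set Spr_σ(h₁, h₂) is empty (and by symmetry, so is Spr_σ(h₂, h₁) when λ₁ ≠ 0). -/
/-!
`σ` acts on linear forms through the companion matrix of `t² - v t - u`, so for a root `λ` of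
that polynomial the form `u α + λ β` is an eigenvector of `σ` with eigenvalue `λ`. Hence
`σ^m(h₂) = λ₂^m h₂` differs from `h₂` by a unit when `λ₂ ≠ 0`, and `h₁`, `h₂` are linearly
independent linear forms when `λ₁ ≠ λ₂`. Any common divisor of two independent linear forms
divides both variables, and `α`, `β` are non-associated primes.
-/

open MvPolynomial

theorem MvPolynomial.isUnit_of_dvd_X_of_dvd_X {σ R : Type*} [CommRing R] [IsDomain R]
    {i j : σ} (hij : i ≠ j) {d : MvPolynomial σ R} (hi : d ∣ X i) (hj : d ∣ X j) :
    IsUnit d := by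
  refine (X_prime.irreducible.dvd_iff.mp hi).resolve_right fun hassoc => hij ?_
  exact X_dvd_X.mp (hassoc.dvd.trans hj)

theorem MvPolynomial.isUnit_of_dvd_linearForms {σ F : Type*} [Field F] {i j : σ} (hij : i ≠ j)
    {a b c e : F} (hdet : a * e - b * c ≠ 0) {d : MvPolynomial σ F}
    (h₁ : d ∣ C a * X i + C b * X j) (h₂ : d ∣ C c * X i + C e * X j) : IsUnit d := by
  have hunit : IsUnit (C (a * e - b * c) : MvPolynomial σ F) := hdet.isUnit.map C
  have hi : d ∣ C (a * e - b * c) * X i := by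
    convert dvd_sub (h₁.mul_left (C e)) (h₂.mul_left (C b)) using 1
    simp only [map_sub, map_mul]; ring
  have hj : d ∣ C (a * e - b * c) * X j := by
    convert dvd_sub (h₂.mul_left (C a)) (h₁.mul_left (C c)) using 1
    simp only [map_sub, map_mul]; ring
  exact isUnit_of_dvd_X_of_dvd_X hij (hunit.dvd_mul_left.mp hi) (hunit.dvd_mul_left.mp hj)

theorem LinearMap.iterate_apply_of_apply_eq_smul {R M : Type*} [Semiring R] [AddCommMonoid M]
    [Module R M] (f : M →ₗ[R] M) {x : M} {c : R} (hx : f x = c • x) (m : ℕ) :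
    f^[m] x = c ^ m • x := by
  induction m with
  | zero => simp
  | succ m ih => rw [Function.iterate_succ_apply', ih, map_smul, hx, smul_smul, ← pow_succ]

section DifferenceField

variable {F : Type*} [Field F] {u v : F}
  {σ : MvPolynomial (Fin 2) F →ₐ[F] MvPolynomial (Fin 2) F}

theorem map_linearForm_of_isRoot (hσα : σ (X 0) = X 1) (hσβ : σ (X 1) = u • X 0 + v • X 1)
    {lam : F} (hroot : lam ^ 2 = v * lam + u) :
    σ (C u * X 0 + C lam * X 1) = lam • (C u * X 0 + C lam * X 1) := by
  rw [map_add, map_mul, map_mul, ← algebraMap_eq, σ.commutes, σ.commutes, hσα, hσβ]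
  have hroot' : (C lam * C lam : MvPolynomial (Fin 2) F) = C v * C lam + C u := by
    rw [← map_mul, ← map_mul, ← map_add, ← sq, hroot]
  rw [algebraMap_eq, smul_eq_C_mul, smul_eq_C_mul, smul_eq_C_mul]
  linear_combination -(X 1 : MvPolynomial (Fin 2) F) * hroot'

theorem isUnit_of_dvd_linearForm_of_dvd_iterate (hu : u ≠ 0) (hσα : σ (X 0) = X 1)
    (hσβ : σ (X 1) = u • X 0 + v • X 1) {lam mu : F} (hroot : mu ^ 2 = v * mu + u)
    (hne : lam ≠ mu) (hmu : mu ≠ 0) (m : ℕ) {d : MvPolynomial (Fin 2) F}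
    (h₁ : d ∣ C u * X 0 + C lam * X 1) (h₂ : d ∣ (⇑σ)^[m] (C u * X 0 + C mu * X 1)) :
    IsUnit d := by
  have hiter := σ.toLinearMap.iterate_apply_of_apply_eq_smul
    (map_linearForm_of_isRoot hσα hσβ hroot) m
  rw [AlgHom.coe_toLinearMap] at hiter
  rw [hiter, smul_eq_C_mul, ((pow_ne_zero m hmu).isUnit.map C).dvd_mul_left] at h₂
  have hdet : u * mu - lam * u ≠ 0 := by
    rw [mul_comm lam, ← mul_sub]
    exact mul_ne_zero hu (sub_ne_zero.mpr hne.symm)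
  exact isUnit_of_dvd_linearForms (by decide) hdet h₁ h₂

end DifferenceField

theorem spread_of_eigenpolynomials_empty
    {F : Type*} [Field F] (u v : F) (hu : u ≠ 0)
    (σ : MvPolynomial (Fin 2) F →ₐ[F] MvPolynomial (Fin 2) F)
    (hσα : σ (X 0) = X 1)
    (hσβ : σ (X 1) = u • X 0 + v • X 1)
    (lam₁ lam₂ : F)
    (hroot₁ : lam₁ ^ 2 = v * lam₁ + u)
    (hroot₂ : lam₂ ^ 2 = v * lam₂ + u)
    (hne : lam₁ ≠ lam₂) (hlam₂ : lam₂ ≠ 0) :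
    (∀ m : ℕ, ∀ d : MvPolynomial (Fin 2) F,
        d ∣ (C u * X 0 + C lam₁ * X 1) →
        d ∣ (⇑σ)^[m] (C u * X 0 + C lam₂ * X 1) → IsUnit d) ∧
    (lam₁ ≠ 0 →
      ∀ m : ℕ, ∀ d : MvPolynomial (Fin 2) F,
        d ∣ (C u * X 0 + C lam₂ * X 1) →
        d ∣ (⇑σ)^[m] (C u * X 0 + C lam₁ * X 1) → IsUnit d) :=
  ⟨fun m _ => isUnit_of_dvd_linearForm_of_dvd_iterate hu hσα hσβ hroot₂ hne hlam₂ m,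
    fun hlam₁ m _ => isUnit_of_dvd_linearForm_of_dvd_iterate hu hσα hσβ hroot₁ hne.symm hlam₁ m⟩
end

section
/- Let a and b be nonzero polynomials in R with equal total degree n, and let a_n and b_n denote their homogeneous components of degree n (their leading homogeneous parts). If a nonzero polynomial g ∈ R of total degree d satisfies a * σ(g) + b * g = 0, then the leading homogeneous part g_d of g satisfies a_n * σ(g_d) + b_n * g_d = 0. -/
/-!
σ sends α and β to linear forms, so it maps homogeneous polynomials of degree k to homogeneous
polynomials of degree k; hence it commutes with taking homogeneous components and does not raise
the total degree. Taking the component of degree n + d of a * σ(g) + b * g = 0, where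
deg a, deg b ≤ n and deg σ(g), deg g ≤ d, leaves only the products of the top components.
-/

open MvPolynomial

namespace MvPolynomial

variable {R σ τ : Type*} [CommSemiring R]

theorem sum_homogeneousComponent_of_totalDegree_le {p : MvPolynomial σ R} {N : ℕ}
    (hp : p.totalDegree ≤ N) :
    ∑ i ∈ Finset.range (N + 1), homogeneousComponent i p = p := by
  conv_rhs => rw [← sum_homogeneousComponent p]
  exact (Finset.sum_subset (Finset.range_subset_range.mpr (Nat.succ_le_succ hp))
    fun i _ hi => homogeneousComponent_eq_zero i p (by simp at hi; omega)).symm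

theorem homogeneousComponent_add_mul {p q : MvPolynomial σ R} {m k : ℕ}
    (hp : p.totalDegree ≤ m) (hq : q.totalDegree ≤ k) :
    homogeneousComponent (m + k) (p * q) =
      homogeneousComponent m p * homogeneousComponent k q := by
  have term (i j : ℕ) (hi : i ≤ m) (hj : j ≤ k) :
      homogeneousComponent (m + k) (homogeneousComponent i p * homogeneousComponent j q) =
        if i = m ∧ j = k then homogeneousComponent m p * homogeneousComponent k q else 0 := by
    rw [homogeneousComponent_of_mem ((homogeneousComponent_isHomogeneous i p).mul
      (homogeneousComponent_isHomogeneous j q))]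
    by_cases h : i = m ∧ j = k
    · obtain ⟨rfl, rfl⟩ := h
      simp
    · rw [if_neg (by omega), if_neg h]
  conv_lhs => rw [← sum_homogeneousComponent_of_totalDegree_le hp,
    ← sum_homogeneousComponent_of_totalDegree_le hq, Finset.sum_mul_sum, map_sum]
  simp_rw [map_sum]
  rw [Finset.sum_congr rfl fun i hi => Finset.sum_congr rfl fun j hj =>
    term i j (Finset.mem_range_succ_iff.mp hi) (Finset.mem_range_succ_iff.mp hj)]
  simp [ite_and]

section LinearSubstitution

variable {φ : MvPolynomial σ R →ₐ[R] MvPolynomial τ R}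

theorem IsHomogeneous.algHom (hφ : ∀ i, (φ (X i)).IsHomogeneous 1) {p : MvPolynomial σ R}
    {k : ℕ} (hp : p.IsHomogeneous k) : (φ p).IsHomogeneous k := by
  simpa [← aeval_unique φ] using hp.aeval (φ ∘ X) hφ

theorem algHom_homogeneousComponent (hφ : ∀ i, (φ (X i)).IsHomogeneous 1) (k : ℕ)
    (p : MvPolynomial σ R) : φ (homogeneousComponent k p) = homogeneousComponent k (φ p) := by
  induction p using MvPolynomial.induction_on' with
  | monomial d c =>
    rw [homogeneousComponent_of_mem (isHomogeneous_monomial c rfl),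
      homogeneousComponent_of_mem ((isHomogeneous_monomial c rfl).algHom hφ)]
    split_ifs <;> simp
  | add p q hp hq => simp [hp, hq]

theorem totalDegree_algHom_le (hφ : ∀ i, (φ (X i)).IsHomogeneous 1) (p : MvPolynomial σ R) :
    (φ p).totalDegree ≤ p.totalDegree := by
  conv_lhs => rw [p.as_sum, map_sum]
  refine (totalDegree_finsetSum _ _).trans (Finset.sup_le fun d hd => ?_)
  exact ((isHomogeneous_monomial _ rfl).algHom hφ).totalDegree_le.trans (le_totalDegree hd)

end LinearSubstitution

end MvPolynomial

theorem leading_part_equation_general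
    {F : Type*} [Field F] (u v : F)
    (σ : MvPolynomial (Fin 2) F →ₐ[F] MvPolynomial (Fin 2) F)
    (hσα : σ (X 0) = X 1)
    (hσβ : σ (X 1) = u • X 0 + v • X 1)
    (a b g : MvPolynomial (Fin 2) F)
    (n : ℕ) (han : a.totalDegree = n) (hbn : b.totalDegree = n)
    (heq : a * σ g + b * g = 0) :
    homogeneousComponent n a * σ (homogeneousComponent g.totalDegree g) +
      homogeneousComponent n b * homogeneousComponent g.totalDegree g = 0 := by
  have hσ : ∀ i, (σ (X i)).IsHomogeneous 1 := by
    refine Fin.forall_fin_two.mpr ⟨hσα ▸ isHomogeneous_X F 1, ?_⟩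
    rw [hσβ, smul_eq_C_mul, smul_eq_C_mul]
    exact ((isHomogeneous_X F 0).C_mul u).add ((isHomogeneous_X F 1).C_mul v)
  have top := congrArg (homogeneousComponent (n + g.totalDegree)) heq
  rwa [map_add, map_zero, homogeneousComponent_add_mul han.le (totalDegree_algHom_le hσ g),
    homogeneousComponent_add_mul hbn.le le_rfl, ← algHom_homogeneousComponent hσ] at top

theorem leading_part_equation
    {F : Type*} [Field F] (u v : F) (hu : u ≠ 0)
    (σ : MvPolynomial (Fin 2) F →ₐ[F] MvPolynomial (Fin 2) F)
    (hσα : σ (X 0) = X 1)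
    (hσβ : σ (X 1) = u • X 0 + v • X 1)
    (a b g : MvPolynomial (Fin 2) F) (ha : a ≠ 0) (hb : b ≠ 0) (hg : g ≠ 0)
    (n : ℕ) (han : a.totalDegree = n) (hbn : b.totalDegree = n)
    (heq : a * σ g + b * g = 0) :
    homogeneousComponent n a * σ (homogeneousComponent g.totalDegree g) +
      homogeneousComponent n b * homogeneousComponent g.totalDegree g = 0 :=
  leading_part_equation_general u v σ hσα hσβ a b g n han hbn heq
end

section
/- Let a and b be homogeneous polynomials in R of the same degree n. If g ∈ R satisfies a * σ(g) + b * g = 0, then for every natural number k the homogeneous component g_k of g of degree k satisfies a * σ(g_k) + b * g_k = 0. -/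
open MvPolynomial

lemma sigma_homog
    {F : Type*} [Field F] (u v : F)
    (σ : MvPolynomial (Fin 2) F →ₐ[F] MvPolynomial (Fin 2) F)
    (hσα : σ (X 0) = X 1)
    (hσβ : σ (X 1) = u • X 0 + v • X 1)
    {p : MvPolynomial (Fin 2) F} {m : ℕ} (hp : p.IsHomogeneous m) :
    (σ p).IsHomogeneous m := by
  rw [MvPolynomial.aeval_unique σ]
  have h1 : ∀ i : Fin 2, ((⇑σ ∘ X) i).IsHomogeneous 1 := by
    intro i
    fin_cases i
    · show (σ (X (0 : Fin 2))).IsHomogeneous 1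
      rw [hσα]; exact isHomogeneous_X _ _
    · show (σ (X (1 : Fin 2))).IsHomogeneous 1
      rw [hσβ]
      rw [← mem_homogeneousSubmodule]
      exact Submodule.add_mem _
        (Submodule.smul_mem _ u ((mem_homogeneousSubmodule _ _).2 (isHomogeneous_X F 0)))
        (Submodule.smul_mem _ v ((mem_homogeneousSubmodule _ _).2 (isHomogeneous_X F 1)))
  simpa using hp.aeval _ h1

theorem homogeneous_components_solve
    {F : Type*} [Field F] (u v : F) (hu : u ≠ 0)
    (σ : MvPolynomial (Fin 2) F →ₐ[F] MvPolynomial (Fin 2) F)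
    (hσα : σ (X 0) = X 1)
    (hσβ : σ (X 1) = u • X 0 + v • X 1)
    (a b : MvPolynomial (Fin 2) F) (n : ℕ)
    (hahom : a.IsHomogeneous n) (hbhom : b.IsHomogeneous n)
    (g : MvPolynomial (Fin 2) F)
    (heq : a * σ g + b * g = 0) :
    ∀ k : ℕ, a * σ (homogeneousComponent k g) + b * homogeneousComponent k g = 0 := by
  intro k
  set N := g.totalDegree with hN
  by_cases hk : N < k
  · rw [homogeneousComponent_eq_zero _ _ hk]
    simp
  push_neg at hk
  have hg : (∑ i ∈ Finset.range (N + 1), homogeneousComponent i g) = g :=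
    sum_homogeneousComponent g
  -- each term is homogeneous
  have hterm : ∀ j, (a * σ (homogeneousComponent j g) + b * homogeneousComponent j g).IsHomogeneous (n + j) := by
    intro j
    have hgj : (homogeneousComponent j g).IsHomogeneous j :=
      homogeneousComponent_isHomogeneous j g
    exact (hahom.mul (sigma_homog u v σ hσα hσβ hgj)).add (hbhom.mul hgj)
  have key : homogeneousComponent (n + k) (a * σ g + b * g)
      = a * σ (homogeneousComponent k g) + b * homogeneousComponent k g := by
    have hsplit : a * σ g + b * g = ∑ i ∈ Finset.range (N + 1),
        (a * σ (homogeneousComponent i g) + b * homogeneousComponent i g) := by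
      rw [Finset.sum_add_distrib, ← Finset.mul_sum, ← Finset.mul_sum, ← map_sum, hg]
    rw [hsplit, map_sum, Finset.sum_eq_single k]
    · exact homogeneousComponent_of_mem (hterm k) |>.trans (if_pos rfl)
    · intro j _ hj
      rw [homogeneousComponent_of_mem (hterm j), if_neg (by omega)]
    · intro h
      exact absurd (Finset.mem_range.mpr (by omega)) h
  rw [← key, heq, map_zero]
end

section
/- In MvPolynomial (Fin 2) ℝ with the Pell difference structure, if a polynomial g satisfies (α² + α + 2β) * σ(g) + (β² + 2β) * g = 0, then g = 0; that is, the homogeneous equation has only the zero polynomial solution. -/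
/-!
Put `A = α² + α + 2β`. It is prime of total degree 2, and `σ` is an invertible linear change
of variables, so every `σⁿ A` is again a prime of total degree at least 2; in particular it
divides neither `β` nor `β + 2`. If `p σ g + β (β + 2) g = 0` with `p = σⁿ A`, then `p ∣ g`,
and cancelling `p` from `g = p h` gives `σ p σ h + β (β + 2) h = 0`, the same equation for the
proper divisor `h` and the prime `σⁿ⁺¹ A`. Since divisibility is well founded, `g = 0`.
-/

open MvPolynomial

theorem eq_zero_of_mul_map_add_mul_eq_zero {R : Type*} [CommRing R] [IsDomain R] [WfDvdMonoid R]
    (σ : R →+* R) (b : R) {S : Set R} (hS : ∀ p ∈ S, Prime p ∧ ¬ p ∣ b ∧ σ p ∈ S)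
    (g : R) {p : R} (hp : p ∈ S) (h : p * σ g + b * g = 0) : g = 0 := by
  induction g using WellFounded.induction (wellFounded_dvdNotUnit (α := R)) generalizing p with
  | _ g ih =>
  obtain ⟨hprime, hb, hσp⟩ := hS p hp
  obtain ⟨k, rfl⟩ : p ∣ g :=
    (hprime.dvd_or_dvd ⟨-σ g, by linear_combination h⟩).resolve_left hb
  have hk : σ p * σ k + b * k = 0 := by
    refine (mul_eq_zero.mp ?_).resolve_left hprime.ne_zero
    rw [map_mul] at h
    linear_combination h
  by_contra hpk
  have hk0 : k ≠ 0 := right_ne_zero_of_mul hpk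
  exact hk0 (ih k ⟨hk0, p, hprime.not_isUnit, mul_comm p k⟩ hσp hk)

namespace MvPolynomial

theorem totalDegree_aeval_le_mul {σ τ R : Type*} [CommSemiring R] {d : ℕ}
    (f : σ → MvPolynomial τ R) (hf : ∀ i, (f i).totalDegree ≤ d) (p : MvPolynomial σ R) :
    (aeval f p).totalDegree ≤ d * p.totalDegree := by
  rw [aeval_eq_eval₂Hom, coe_eval₂Hom, eval₂_eq]
  refine totalDegree_finsetSum_le fun s hs => ?_
  calc _ ≤ (algebraMap R (MvPolynomial τ R) (coeff s p)).totalDegree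
          + (∏ i ∈ s.support, f i ^ s i).totalDegree := totalDegree_mul _ _
    _ ≤ 0 + ∑ i ∈ s.support, d * s i := by
        gcongr
        · simp [algebraMap_eq]
        · refine (totalDegree_finsetProd _ _).trans (Finset.sum_le_sum fun i _ => ?_)
          exact (totalDegree_pow _ _).trans (by rw [mul_comm]; gcongr; exact hf i)
    _ ≤ d * p.totalDegree := by
        rw [zero_add, ← Finset.mul_sum]
        exact Nat.mul_le_mul_left d (le_totalDegree hs)

end MvPolynomial

theorem prime_X_zero_sq_add_X_zero_add_two_mul_X_one :
    Prime (X 0 ^ 2 + X 0 + 2 * X 1 : MvPolynomial (Fin 2) ℝ) := by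
  have hA : (X 0 ^ 2 + X 0 + 2 * X 1 : MvPolynomial (Fin 2) ℝ) = C 2 * X 1 + (X 0 ^ 2 + X 0) := by
    rw [map_ofNat C 2]; ring
  have hvars : (1 : Fin 2) ∉ (X 0 ^ 2 + X 0 : MvPolynomial (Fin 2) ℝ).vars := by
    intro h
    obtain h | h := Finset.mem_union.mp (vars_add_subset _ _ h)
    · simpa [vars_X] using vars_pow _ _ h
    · simp [vars_X] at h
  rw [hA]
  exact (irreducible_mul_X_add _ _ 1 (by simp) (by simp) hvars
    ((IsUnit.mk0 (2 : ℝ) two_ne_zero).map C).isRelPrime_left).prime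

theorem two_le_totalDegree_X_zero_sq_add_X_zero_add_two_mul_X_one :
    2 ≤ (X 0 ^ 2 + X 0 + 2 * X 1 : MvPolynomial (Fin 2) ℝ).totalDegree := by
  have hmem : Finsupp.single 0 2 ∈ (X 0 ^ 2 + X 0 + 2 * X 1 : MvPolynomial (Fin 2) ℝ).support := by
    rw [mem_support_iff, ← map_ofNat C 2]
    simp [coeff_X_pow, coeff_X, coeff_C_mul, Finsupp.single_eq_single_iff]
  simpa using le_totalDegree hmem

theorem not_dvd_X_one_sq_add_two_mul_X_one {p : MvPolynomial (Fin 2) ℝ} (hp : Prime p)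
    (hdeg : 2 ≤ p.totalDegree) : ¬ p ∣ X 1 ^ 2 + 2 * X 1 := by
  have hlin (q : MvPolynomial (Fin 2) ℝ) (hq : q ≠ 0) (hq1 : q.totalDegree ≤ 1) : ¬ p ∣ q :=
    fun hpq => by have := totalDegree_le_of_dvd_of_isDomain hpq hq; omega
  rw [show (X 1 ^ 2 + 2 * X 1 : MvPolynomial (Fin 2) ℝ) = X 1 * (X 1 + C 2) by
    rw [map_ofNat C 2]; ring]
  intro h
  obtain h | h := hp.dvd_or_dvd h
  · exact hlin _ (X_ne_zero 1) (by simp) h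
  · refine hlin _ (fun h0 => by simpa using congrArg constantCoeff h0) ?_ h
    exact (totalDegree_add _ _).trans (by simp)

noncomputable def pellShiftInv : MvPolynomial (Fin 2) ℝ →ₐ[ℝ] MvPolynomial (Fin 2) ℝ :=
  aeval ![X 1 - 2 * X 0, X 0]

theorem pellShiftInv_comp (σ : MvPolynomial (Fin 2) ℝ →ₐ[ℝ] MvPolynomial (Fin 2) ℝ)
    (hσα : σ (X 0) = X 1) (hσβ : σ (X 1) = X 0 + 2 * X 1) :
    pellShiftInv.comp σ = AlgHom.id ℝ _ := by
  refine algHom_ext fun i => ?_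
  fin_cases i <;> simp [pellShiftInv, hσα, hσβ, map_ofNat]

theorem comp_pellShiftInv (σ : MvPolynomial (Fin 2) ℝ →ₐ[ℝ] MvPolynomial (Fin 2) ℝ)
    (hσα : σ (X 0) = X 1) (hσβ : σ (X 1) = X 0 + 2 * X 1) :
    σ.comp pellShiftInv = AlgHom.id ℝ _ := by
  refine algHom_ext fun i => ?_
  fin_cases i <;> simp [pellShiftInv, hσα, hσβ, map_ofNat]

theorem totalDegree_le_totalDegree_pellShift
    (σ : MvPolynomial (Fin 2) ℝ →ₐ[ℝ] MvPolynomial (Fin 2) ℝ)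
    (hσα : σ (X 0) = X 1) (hσβ : σ (X 1) = X 0 + 2 * X 1) (p : MvPolynomial (Fin 2) ℝ) :
    p.totalDegree ≤ (σ p).totalDegree := by
  have hinv : ∀ i, (![X 1 - 2 * X 0, X 0] i : MvPolynomial (Fin 2) ℝ).totalDegree ≤ 1 := by
    intro i
    fin_cases i
    · refine (totalDegree_sub _ _).trans (max_le (by simp) ?_)
      exact (totalDegree_mul _ _).trans (by simp [← map_ofNat C 2])
    · simp
  calc p.totalDegree = (pellShiftInv (σ p)).totalDegree := by
        rw [← AlgHom.comp_apply, pellShiftInv_comp σ hσα hσβ, AlgHom.id_apply]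
    _ ≤ 1 * (σ p).totalDegree := totalDegree_aeval_le_mul _ hinv _
    _ = (σ p).totalDegree := one_mul _

theorem pell_homogeneous_only_zero
    (σ : MvPolynomial (Fin 2) ℝ →ₐ[ℝ] MvPolynomial (Fin 2) ℝ)
    (hσα : σ (X 0) = X 1)
    (hσβ : σ (X 1) = X 0 + 2 * X 1)
    (g : MvPolynomial (Fin 2) ℝ)
    (heq : ((X 0) ^ 2 + X 0 + 2 * X 1) * σ g + ((X 1) ^ 2 + 2 * X 1) * g = 0) :
    g = 0 := by
  let e : MvPolynomial (Fin 2) ℝ ≃ₐ[ℝ] MvPolynomial (Fin 2) ℝ :=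
    AlgEquiv.ofAlgHom σ pellShiftInv (comp_pellShiftInv σ hσα hσβ) (pellShiftInv_comp σ hσα hσβ)
  refine eq_zero_of_mul_map_add_mul_eq_zero σ.toRingHom _ (S := {p | Prime p ∧ 2 ≤ p.totalDegree})
    ?_ g ⟨prime_X_zero_sq_add_X_zero_add_two_mul_X_one,
      two_le_totalDegree_X_zero_sq_add_X_zero_add_two_mul_X_one⟩ heq
  rintro p ⟨hp, hdeg⟩
  exact ⟨hp, not_dvd_X_one_sq_add_two_mul_X_one hp hdeg, (MulEquiv.prime_iff e).mpr hp,
    hdeg.trans (totalDegree_le_totalDegree_pellShift σ hσα hσβ p)⟩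
end

section
/- For every natural number m, the cubes of the Fibonacci numbers satisfy 2 * (∑_{n=1}^{m} (fib n)³) = 3 * fib (m+1) * (fib (m+2))² − (fib (m+2))³ − 3 * (fib (m+1))³ + 1, where the identity is read in ℤ (equivalently, 2·∑_{n=1}^{m} F_n³ + F_{m+2}³ + 3·F_{m+1}³ = 3·F_{m+1}·F_{m+2}² + 1 in ℕ). -/
/-!
The right-hand side is `f (F (m+1)) (F (m+2)) + 1` for the cubic form
`f a b = 3 a b² - b³ - 3 a³`, and the Fibonacci step `(a, b) ↦ (b, a + b)` raises `f` by
exactly `2 a³`, so the sum telescopes.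
-/

theorem cubic_form_fib_step {R : Type*} [CommRing R] (a b : R) :
    3 * b * (a + b) ^ 2 - (a + b) ^ 3 - 3 * b ^ 3 = 3 * a * b ^ 2 - b ^ 3 - 3 * a ^ 3 + 2 * a ^ 3 := by
  ring

theorem sum_fib_cubes (m : ℕ) :
    2 * (∑ n ∈ Finset.Icc 1 m, (Nat.fib n : ℤ) ^ 3) =
      3 * (Nat.fib (m + 1) : ℤ) * (Nat.fib (m + 2) : ℤ) ^ 2 -
        (Nat.fib (m + 2) : ℤ) ^ 3 - 3 * (Nat.fib (m + 1) : ℤ) ^ 3 + 1 := by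
  induction m with
  | zero => simp
  | succ k ih =>
    have hfib : (Nat.fib (k + 3) : ℤ) = Nat.fib (k + 1) + Nat.fib (k + 2) := by
      exact_mod_cast Nat.fib_add_two
    rw [Finset.sum_Icc_succ_top (by omega), mul_add, ih, hfib, cubic_form_fib_step]
    ring
end

section
/- For every natural number m, the cubes of the Fibonacci numbers satisfy, in ℤ, 4 * (∑_{n=1}^{m} (fib n)³) = (fib (m+2))³ − 3 * (fib (m+1))³ + 3 * (−1)^m * fib m + 2 (Rao's identity). -/
/-! Both sides vanish at `m = 0`, so it suffices that they grow by the same amount from `m` to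
`m + 1`. With `a = fib m`, `b = fib (m + 1)`, the increment of the right-hand side minus `4 b ^ 3`
equals `-3 (a + b) ((a + b) a - b ^ 2 - (-1) ^ (m + 1))`, which vanishes by Cassini's identity. -/

theorem Nat.fib_add_two_mul_fib_sub_fib_add_one_sq (n : ℕ) :
    (Nat.fib (n + 2) : ℤ) * Nat.fib n - (Nat.fib (n + 1) : ℤ) ^ 2 = (-1) ^ (n + 1) := by
  have h := Int.fib_succ_mul_fib_pred_sub_fib_sq (n + 1 : ℕ)
  rw [Int.natAbs_natCast, Nat.cast_add_one, add_sub_cancel_right, add_assoc,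
    one_add_one_eq_two] at h
  simpa only [← Int.fib_natCast, Nat.cast_add, Nat.cast_ofNat, Nat.cast_one] using h

theorem sum_fib_cubes_rao (m : ℕ) :
    4 * (∑ n ∈ Finset.Icc 1 m, (Nat.fib n : ℤ) ^ 3) =
      (Nat.fib (m + 2) : ℤ) ^ 3 - 3 * (Nat.fib (m + 1) : ℤ) ^ 3 +
        3 * (-1 : ℤ) ^ m * (Nat.fib m : ℤ) + 2 := by
  induction m with
  | zero => simp
  | succ k ih =>
    rw [Finset.sum_Icc_succ_top (by omega), mul_add, ih]
    have cassini := Nat.fib_add_two_mul_fib_sub_fib_add_one_sq k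
    simp only [Nat.fib_add_two, Nat.cast_add] at cassini ⊢
    linear_combination (3 * ((Nat.fib k : ℤ) + Nat.fib (k + 1))) * cassini
end
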